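/- arXiv:math/0201229 — 4 statements merged into one kernel-verified Lean document; each statement's English description precedes it below -/
import Mathlib

section
/- Let k be a field of characteristic zero and let (C, d) be the cochain complex of k-vector spaces with basis {u^a y^b : a, b ≥ 0} in degree 2a + 2b and {u^a y^b x : a, b ≥ 0} in degree 2a + 2b + 1, with differential determined by d(u^a y^b) = b · u^{a+1} y^{b-1} x and d(u^a y^b x) = 0. Then H^0(C) ≅ k (spanned by 1), H^{2n}(C) ≅ k for every n ≥ 1 (spanned by the class of u^n), and H^{2n+1}(C) ≅ k for every n ≥ 0 (spanned by the class of y^n x). -/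
noncomputable section

/-- Index set for the basis of the complex in degree `n`: pairs `(a, b)` with
`u^a y^b` in degree `2a + 2b = n` (even case) or `u^a y^b x` in degree
`2a + 2b + 1 = n` (odd case). -/
def BIdx (n : ℕ) : Type :=
  {p : ℕ × ℕ // 2 * p.1 + 2 * p.2 = n ∨ 2 * p.1 + 2 * p.2 + 1 = n}

variable (k : Type) [Field k] [CharZero k]

/-- The degree `n` part of the complex: the free `k`-module on `BIdx n`. -/
def Cdeg (n : ℕ) : Type := BIdx n →₀ k

instance (n : ℕ) : AddCommGroup (Cdeg k n) :=
  inferInstanceAs (AddCommGroup (BIdx n →₀ k))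

instance (n : ℕ) : Module k (Cdeg k n) :=
  inferInstanceAs (Module k (BIdx n →₀ k))

/-- Value of the differential on a basis element: `d(u^a y^b) = b • u^(a+1) y^(b-1) x`
and `d(u^a y^b x) = 0`. -/
def dBasis {n : ℕ} (p : BIdx n) : Cdeg k (n + 1) :=
  if h : 2 * p.1.1 + 2 * p.1.2 = n ∧ 0 < p.1.2 then
    (p.1.2 : k) • Finsupp.single ⟨(p.1.1 + 1, p.1.2 - 1), by omega⟩ (1 : k)
  else 0

/-- The basis vector of `Cdeg k n` indexed by `p`. -/
def gen (n : ℕ) (p : BIdx n) : Cdeg k n := Finsupp.single p (1 : k)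

/-- The differential of the complex. -/
def dMap (n : ℕ) : Cdeg k n →ₗ[k] Cdeg k (n + 1) :=
  Finsupp.linearCombination k (dBasis k)

end

/-! The map `s(u^a y^b x) = u^(a-1) y^(b+1) / (b + 1)` for `a > 0`, `s(y^b x) = 0`, is a
contracting homotopy away from the classes `uⁿ` and `yᵐ x`: writing `π` for the coordinate
projection onto `uⁿ` in degree `2n` and onto `yᵐ x` in degree `2m + 1`, one has `s ∘ d = 1 - π`
in even and `d ∘ s = 1 - π` in odd degrees. Every even cocycle is therefore a multiple of `uⁿ`,
every odd cochain is a multiple of `yᵐ x` modulo coboundaries, and `yᵐ x` is not a coboundary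
because `π ∘ d = 0`. Dividing by `b + 1` is where characteristic zero enters. -/

noncomputable section

variable {k : Type} [Field k] {n : ℕ}

lemma Cdeg.hom_ext {M : Type*} [AddCommGroup M] [Module k M] {f g : Cdeg k n →ₗ[k] M}
    (h : ∀ p, f (gen k n p) = g (gen k n p)) : f = g :=
  Finsupp.basisSingleOne.ext h

lemma gen_ne_zero (p : BIdx n) : gen k n p ≠ 0 :=
  Finsupp.single_ne_zero.mpr one_ne_zero

lemma dMap_gen (p : BIdx n) : dMap k n (gen k n p) = dBasis k p :=
  (Finsupp.linearCombination_single k 1 p).trans (one_smul k _)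

lemma dBasis_eq_smul_gen {p : BIdx n} {r : BIdx (n + 1)} (h₁ : r.1.1 = p.1.1 + 1)
    (h₂ : p.1.2 = r.1.2 + 1) : dBasis k p = (p.1.2 : k) • gen k (n + 1) r := by
  obtain ⟨⟨a, b⟩, hp⟩ := p
  obtain ⟨⟨c, d⟩, hr⟩ := r
  dsimp only at h₁ h₂ hp hr
  subst h₁ h₂
  exact dif_pos (show 2 * a + 2 * (d + 1) = n ∧ 0 < d + 1 by omega)

lemma dMap_gen_of_snd_eq_zero {p : BIdx n} (hb : p.1.2 = 0) : dMap k n (gen k n p) = 0 :=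
  (dMap_gen p).trans (dif_neg (by omega))

lemma dMap_two_mul_add_one (m : ℕ) : dMap k (2 * m + 1) = 0 :=
  Cdeg.hom_ext fun p => (dMap_gen p).trans (dif_neg (by have := p.2; omega))

variable (k) in
def projGen (q : BIdx n) : Cdeg k n →ₗ[k] Cdeg k n :=
  LinearMap.smulRight (Finsupp.lapply (R := k) (M := k) q) (gen k n q)

lemma projGen_apply (q : BIdx n) (z : Cdeg k n) :
    projGen k q z = Finsupp.lapply (R := k) (M := k) q z • gen k n q :=
  rfl

lemma projGen_gen_self (q : BIdx n) : projGen k q (gen k n q) = gen k n q :=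
  (congrArg (· • gen k n q) Finsupp.single_eq_same).trans (one_smul k _)

lemma projGen_gen_of_ne {p q : BIdx n} (h : p ≠ q) : projGen k q (gen k n p) = 0 :=
  (congrArg (· • gen k n q) (Finsupp.single_eq_of_ne h.symm)).trans (zero_smul k _)

lemma dMap_comp_projGen_of_snd_eq_zero {q : BIdx n} (hq : q.1.2 = 0) :
    dMap k n ∘ₗ projGen k q = 0 :=
  LinearMap.ext fun z => by
    rw [LinearMap.comp_apply, projGen_apply, map_smul, dMap_gen_of_snd_eq_zero hq, smul_zero,
      LinearMap.zero_apply]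

variable (k) in
def sBasis (p : BIdx (n + 1)) : Cdeg k n :=
  if h : 2 * p.1.1 + 2 * p.1.2 = n ∧ 0 < p.1.1 then
    ((p.1.2 + 1 : ℕ) : k)⁻¹ • gen k n ⟨(p.1.1 - 1, p.1.2 + 1), Or.inl (by omega)⟩
  else 0

variable (k) in
def sMap (n : ℕ) : Cdeg k (n + 1) →ₗ[k] Cdeg k n :=
  Finsupp.linearCombination k (sBasis k)

lemma sMap_gen (p : BIdx (n + 1)) : sMap k n (gen k (n + 1) p) = sBasis k p :=
  (Finsupp.linearCombination_single k 1 p).trans (one_smul k _)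

lemma sBasis_eq_inv_smul_gen {p : BIdx (n + 1)} {q : BIdx n} (h₁ : p.1.1 = q.1.1 + 1)
    (h₂ : q.1.2 = p.1.2 + 1) : sBasis k p = (q.1.2 : k)⁻¹ • gen k n q := by
  obtain ⟨⟨a, b⟩, hp⟩ := p
  obtain ⟨⟨c, d⟩, hq⟩ := q
  dsimp only at h₁ h₂ hp hq
  subst h₁ h₂
  exact dif_pos (show 2 * (c + 1) + 2 * b = n ∧ 0 < c + 1 by omega)

lemma sMap_gen_of_fst_eq_zero {p : BIdx (n + 1)} (ha : p.1.1 = 0) :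
    sMap k n (gen k (n + 1) p) = 0 :=
  (sMap_gen p).trans (dif_neg (by omega))

variable [CharZero k]

theorem sMap_comp_dMap {q : BIdx n} (hq₁ : 2 * q.1.1 = n) (hq₂ : q.1.2 = 0) :
    sMap k n ∘ₗ dMap k n = LinearMap.id - projGen k q := by
  refine Cdeg.hom_ext fun p => ?_
  rw [LinearMap.comp_apply, LinearMap.sub_apply, LinearMap.id_apply]
  have hp := p.2
  rcases Nat.eq_zero_or_pos p.1.2 with hb | hb
  · obtain rfl : p = q := Subtype.ext (Prod.ext (by omega) (by omega))
    rw [dMap_gen_of_snd_eq_zero hb, map_zero, projGen_gen_self, sub_self]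
  · obtain ⟨r, h₁, h₂⟩ : ∃ r : BIdx (n + 1), r.1.1 = p.1.1 + 1 ∧ p.1.2 = r.1.2 + 1 :=
      ⟨⟨(p.1.1 + 1, p.1.2 - 1), Or.inr (by omega)⟩, rfl, (Nat.sub_add_cancel hb).symm⟩
    have hpq : p ≠ q := fun h => by rw [h] at hb; omega
    rw [dMap_gen, dBasis_eq_smul_gen h₁ h₂, map_smul, sMap_gen, sBasis_eq_inv_smul_gen h₁ h₂,
      projGen_gen_of_ne hpq, sub_zero, smul_smul, mul_inv_cancel₀ (Nat.cast_ne_zero.mpr (by omega)),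
      one_smul]

theorem dMap_comp_sMap (m : ℕ) {q : BIdx (2 * m + 1)} (hq : q.1.1 = 0) :
    dMap k (2 * m) ∘ₗ sMap k (2 * m) = LinearMap.id - projGen k q := by
  refine Cdeg.hom_ext fun p => ?_
  rw [LinearMap.comp_apply, LinearMap.sub_apply, LinearMap.id_apply]
  have hp := p.2
  have := q.2
  rcases Nat.eq_zero_or_pos p.1.1 with ha | ha
  · obtain rfl : p = q := Subtype.ext (Prod.ext (by omega) (by omega))
    rw [sMap_gen_of_fst_eq_zero ha, map_zero, projGen_gen_self, sub_self]
  · obtain ⟨r, h₁, h₂⟩ : ∃ r : BIdx (2 * m), p.1.1 = r.1.1 + 1 ∧ r.1.2 = p.1.2 + 1 :=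
      ⟨⟨(p.1.1 - 1, p.1.2 + 1), Or.inl (by omega)⟩, (Nat.sub_add_cancel ha).symm, rfl⟩
    have hpq : p ≠ q := fun h => by rw [h] at ha; omega
    rw [sMap_gen, sBasis_eq_inv_smul_gen h₁ h₂, map_smul, dMap_gen, dBasis_eq_smul_gen h₁ h₂,
      projGen_gen_of_ne hpq, sub_zero, smul_smul, inv_mul_cancel₀ (Nat.cast_ne_zero.mpr (by omega)),
      one_smul]

theorem projGen_comp_dMap (m : ℕ) {q : BIdx (2 * m + 1)} (hq : q.1.1 = 0) :
    projGen k q ∘ₗ dMap k (2 * m) = 0 := by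
  obtain ⟨q', hq'⟩ : ∃ q' : BIdx (2 * m), q'.1 = (m, 0) := ⟨⟨(m, 0), Or.inl (by omega)⟩, rfl⟩
  -- `π ∘ d = (1 - d ∘ s) ∘ d = d ∘ (1 - s ∘ d) = d ∘ π'`, and `d` kills the image `k • uᵐ` of `π'`.
  rw [← sub_sub_cancel LinearMap.id (projGen k q), ← dMap_comp_sMap m hq, LinearMap.sub_comp,
    LinearMap.id_comp, LinearMap.comp_assoc, sMap_comp_dMap (by rw [hq']) (by rw [hq']),
    LinearMap.comp_sub, LinearMap.comp_id, sub_sub_cancel,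
    dMap_comp_projGen_of_snd_eq_zero (by rw [hq'])]

theorem exists_eq_smul_gen_of_dMap_eq_zero {q : BIdx n} (hq₁ : 2 * q.1.1 = n) (hq₂ : q.1.2 = 0)
    {z : Cdeg k n} (hz : dMap k n z = 0) : ∃ c : k, z = c • gen k n q := by
  have h := LinearMap.congr_fun (sMap_comp_dMap (k := k) hq₁ hq₂) z
  rw [LinearMap.comp_apply, hz, map_zero, LinearMap.sub_apply, LinearMap.id_apply,
    eq_comm, sub_eq_zero, projGen_apply] at h
  exact ⟨_, h⟩

theorem exists_sub_smul_gen_mem_range (m : ℕ) {q : BIdx (2 * m + 1)} (hq : q.1.1 = 0)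
    (z : Cdeg k (2 * m + 1)) :
    ∃ c : k, z - c • gen k (2 * m + 1) q ∈ LinearMap.range (dMap k (2 * m)) := by
  refine ⟨Finsupp.lapply (R := k) (M := k) q z, sMap k (2 * m) z, ?_⟩
  rw [← LinearMap.comp_apply, dMap_comp_sMap m hq, LinearMap.sub_apply, LinearMap.id_apply,
    projGen_apply]

theorem gen_notMem_range_dMap (m : ℕ) {q : BIdx (2 * m + 1)} (hq : q.1.1 = 0) :
    gen k (2 * m + 1) q ∉ LinearMap.range (dMap k (2 * m)) := by
  rintro ⟨w, hw⟩
  have h := LinearMap.congr_fun (projGen_comp_dMap (k := k) m hq) w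
  rw [LinearMap.comp_apply, hw, projGen_gen_self] at h
  exact gen_ne_zero _ h

variable (k)

/-- the cochain complex with basis `{u^a y^b}` in degree `2a+2b` and
`{u^a y^b x}` in degree `2a+2b+1`, and differential `d(u^a y^b) = b·u^(a+1) y^(b-1) x`,
`d(u^a y^b x) = 0`, has `H⁰ ≅ k` spanned by `1`, `H^{2n} ≅ k` spanned by the class of
`u^n` for `n ≥ 1`, and `H^{2n+1} ≅ k` spanned by the class of `y^n x` for `n ≥ 0`.
(Each cohomology being one-dimensional spanned by the indicated class is expressed
elementwise: the indicated element is a cocycle, every cocycle agrees with a scalar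
multiple of it up to a coboundary, and it is not itself a coboundary.) -/
theorem stmt_1 :
    -- `H⁰ ≅ k`, spanned by `1 = u^0 y^0`:
    (gen k 0 ⟨(0, 0), by omega⟩ ∈ LinearMap.ker (dMap k 0) ∧
      (∀ z ∈ LinearMap.ker (dMap k 0),
        ∃ c : k, z = c • gen k 0 ⟨(0, 0), by omega⟩) ∧
      gen k 0 ⟨(0, 0), by omega⟩ ≠ 0) ∧
    -- `H^{2n} ≅ k` for `n = m + 1 ≥ 1`, spanned by the class of `u^n`:
    (∀ m : ℕ,
      gen k (2 * m + 1 + 1) ⟨(m + 1, 0), by omega⟩ ∈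
          LinearMap.ker (dMap k (2 * m + 1 + 1)) ∧
      (∀ z ∈ LinearMap.ker (dMap k (2 * m + 1 + 1)),
        ∃ c : k, z - c • gen k (2 * m + 1 + 1) ⟨(m + 1, 0), by omega⟩ ∈
          LinearMap.range (dMap k (2 * m + 1))) ∧
      gen k (2 * m + 1 + 1) ⟨(m + 1, 0), by omega⟩ ∉
        LinearMap.range (dMap k (2 * m + 1))) ∧
    -- `H^{2n+1} ≅ k` for `n ≥ 0`, spanned by the class of `y^n x`:
    (∀ m : ℕ,
      gen k (2 * m + 1) ⟨(0, m), by omega⟩ ∈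
          LinearMap.ker (dMap k (2 * m + 1)) ∧
      (∀ z ∈ LinearMap.ker (dMap k (2 * m + 1)),
        ∃ c : k, z - c • gen k (2 * m + 1) ⟨(0, m), by omega⟩ ∈
          LinearMap.range (dMap k (2 * m))) ∧
      gen k (2 * m + 1) ⟨(0, m), by omega⟩ ∉
        LinearMap.range (dMap k (2 * m))) := by
  refine ⟨⟨dMap_gen_of_snd_eq_zero rfl,
      fun z hz => exists_eq_smul_gen_of_dMap_eq_zero rfl rfl hz, gen_ne_zero _⟩,
    fun m => ⟨dMap_gen_of_snd_eq_zero rfl, fun z hz => ?_, ?_⟩,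
    fun m => ⟨LinearMap.congr_fun (dMap_two_mul_add_one m) _,
      fun z _ => exists_sub_smul_gen_mem_range m rfl z, gen_notMem_range_dMap m rfl⟩⟩
  · obtain ⟨c, rfl⟩ := exists_eq_smul_gen_of_dMap_eq_zero (n := 2 * m + 1 + 1)
      (q := ⟨(m + 1, 0), by omega⟩) rfl rfl hz
    exact ⟨c, by rw [sub_self]; exact Submodule.zero_mem _⟩
  · rw [dMap_two_mul_add_one, LinearMap.range_zero, Submodule.mem_bot]
    exact gen_ne_zero _

end
end

section
/- For i = 1, 2 let ε_i : C_i → R and η_i : D_i → R be chain maps of cochain complexes with each ε_i and η_i degreewise surjective, and assume H^n(ε_1) is surjective for every n. Let φ_i : C_i → D_i be quasi-isomorphisms with η_i ∘ φ_i = ε_i. Then the induced chain map on fiber products C_1 ⊕_R C_2 → D_1 ⊕_R D_2 is a quasi-isomorphism, where C_1 ⊕_R C_2 denotes the kernel of ε_1 - ε_2 : C_1 ⊕ C_2 → R, and similarly for D_1 ⊕_R D_2. -/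
open CategoryTheory Limits

section Aux

variable {C : Type*} [Category C] [Abelian C] {ι : Type*} {c : ComplexShape ι}

/-- An additive functor applied to `biprod.map`. -/
lemma aux_map_biprod_map {D : Type*} [Category D] [Abelian D] (F : C ⥤ D) [F.Additive]
    {K₁ K₂ L₁ L₂ : C} (f : K₁ ⟶ L₁) (g : K₂ ⟶ L₂)
    [PreservesBinaryBiproduct K₁ K₂ F] [PreservesBinaryBiproduct L₁ L₂ F] :
    F.map (biprod.map f g) ≫ (F.mapBiprod L₁ L₂).hom =
      (F.mapBiprod K₁ K₂).hom ≫ biprod.map (F.map f) (F.map g) := by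
  rw [Functor.mapBiprod_hom, Functor.mapBiprod_hom]
  apply biprod.hom_ext
  · simp only [CategoryTheory.Category.assoc, biprod.lift_fst, biprod.map_fst,
      biprod.lift_fst_assoc]
    rw [← F.map_comp, ← F.map_comp, biprod.map_fst]
  · simp only [CategoryTheory.Category.assoc, biprod.lift_snd, biprod.map_snd,
      biprod.lift_snd_assoc]
    rw [← F.map_comp, ← F.map_comp, biprod.map_snd]

/-- The biproduct of two quasi-isomorphisms is a quasi-isomorphism. -/
lemma aux_quasiIso_biprod_map {K₁ K₂ L₁ L₂ : HomologicalComplex C c}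
    (f : K₁ ⟶ L₁) (g : K₂ ⟶ L₂) [QuasiIso f] [QuasiIso g] :
    QuasiIso (biprod.map f g) := by
  rw [quasiIso_iff]
  intro i
  rw [quasiIsoAt_iff_isIso_homologyMap]
  let F := HomologicalComplex.homologyFunctor C c i
  have : PreservesBinaryBiproducts F := preservesBinaryBiproducts_of_preservesBiproducts F
  have hf : IsIso (F.map f) := by
    have : QuasiIsoAt f i := inferInstance
    rw [quasiIsoAt_iff_isIso_homologyMap] at this
    exact this
  have hg : IsIso (F.map g) := by
    have : QuasiIsoAt g i := inferInstance
    rw [quasiIsoAt_iff_isIso_homologyMap] at this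
    exact this
  have hbi : IsIso (biprod.map (F.map f) (F.map g)) := by
    rw [show biprod.map (F.map f) (F.map g) =
      (biprod.mapIso (asIso (F.map f)) (asIso (F.map g))).hom from rfl]
    infer_instance
  have heq : F.map (biprod.map f g) =
      ((F.mapBiprod K₁ K₂).hom ≫ biprod.map (F.map f) (F.map g)) ≫
        (F.mapBiprod L₁ L₂).inv :=
    (Iso.eq_comp_inv _).mpr (aux_map_biprod_map F f g)
  have : IsIso (F.map (biprod.map f g)) := by
    rw [heq]
    infer_instance
  exact this

/-- Two-out-of-three for quasi-isomorphisms in a degreewise short exact sequence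
of cochain complexes: if `τ₂` and `τ₃` are quasi-isos, so is `τ₁`. -/
lemma aux_quasiIso_τ₁ {S₁ S₂ : ShortComplex (CochainComplex C ℤ)} (φ : S₁ ⟶ S₂)
    (hS₁ : S₁.ShortExact) (hS₂ : S₂.ShortExact)
    (h₂ : QuasiIso φ.τ₂) (h₃ : QuasiIso φ.τ₃) :
    QuasiIso φ.τ₁ := by
  rw [quasiIso_iff]
  intro j
  rw [quasiIsoAt_iff_isIso_homologyMap]
  have hij : (ComplexShape.up ℤ).Rel (j - 1) j := by simp
  have iso₂ : ∀ n : ℤ, IsIso (HomologicalComplex.homologyMap φ.τ₂ n) := fun n => by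
    have : QuasiIsoAt φ.τ₂ n := inferInstance
    rw [quasiIsoAt_iff_isIso_homologyMap] at this
    exact this
  have iso₃ : ∀ n : ℤ, IsIso (HomologicalComplex.homologyMap φ.τ₃ n) := fun n => by
    have : QuasiIsoAt φ.τ₃ n := inferInstance
    rw [quasiIsoAt_iff_isIso_homologyMap] at this
    exact this
  have e₁ := (HomologicalComplex.HomologySequence.composableArrows₅_exact hS₁ (j - 1) j hij).δ₀
  have e₂ := (HomologicalComplex.HomologySequence.composableArrows₅_exact hS₂ (j - 1) j hij).δ₀
  have h0 : Epi (HomologicalComplex.homologyMap φ.τ₂ (j - 1)) :=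
    have := iso₂ (j - 1); inferInstance
  have h4 : Mono (HomologicalComplex.homologyMap φ.τ₃ j) :=
    have := iso₃ j; inferInstance
  have key := Abelian.isIso_of_epi_of_isIso_of_isIso_of_mono e₁ e₂
    (ComposableArrows.δ₀Functor.map
      (HomologicalComplex.HomologySequence.mapComposableArrows₅ φ hS₁ hS₂ (j - 1) j hij))
    (by exact h0) (by exact iso₃ (j - 1)) (by exact iso₂ j) (by exact h4)
  exact key

end Aux

/-- Given degreewise surjective chain maps `ε₁ : C₁ → R`, `ε₂ : C₂ → R`,
`η₁ : D₁ → R`, `η₂ : D₂ → R` with `Hⁿ(ε₁)` surjective for all `n`, and quasi-isomorphisms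
`φ₁ : C₁ → D₁`, `φ₂ : C₂ → D₂` with `η₁ ∘ φ₁ = ε₁` and `η₂ ∘ φ₂ = ε₂`, the induced
chain map on fiber products `ker (ε₁ - ε₂ : C₁ ⊕ C₂ → R) → ker (η₁ - η₂ : D₁ ⊕ D₂ → R)`
is a quasi-isomorphism. -/
theorem stmt_4 {A : Type} [CommRing A]
    (C₁ C₂ D₁ D₂ R : CochainComplex (ModuleCat A) ℤ)
    (ε₁ : C₁ ⟶ R) (ε₂ : C₂ ⟶ R) (η₁ : D₁ ⟶ R) (η₂ : D₂ ⟶ R)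
    (hε₁ : ∀ n : ℤ, Function.Surjective (ε₁.f n))
    (hε₂ : ∀ n : ℤ, Function.Surjective (ε₂.f n))
    (hη₁ : ∀ n : ℤ, Function.Surjective (η₁.f n))
    (hη₂ : ∀ n : ℤ, Function.Surjective (η₂.f n))
    (hH : ∀ n : ℤ, Function.Surjective (HomologicalComplex.homologyMap ε₁ n))
    (φ₁ : C₁ ⟶ D₁) (φ₂ : C₂ ⟶ D₂) [QuasiIso φ₁] [QuasiIso φ₂]
    (h₁ : φ₁ ≫ η₁ = ε₁) (h₂ : φ₂ ≫ η₂ = ε₂) :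
    QuasiIso (kernel.map (biprod.desc ε₁ (-ε₂)) (biprod.desc η₁ (-η₂))
      (biprod.map φ₁ φ₂) (𝟙 R)
      (by apply biprod.hom_ext' <;> simp [h₁, h₂])) := by
  let gC : C₁ ⊞ C₂ ⟶ R := biprod.desc ε₁ (-ε₂)
  let gD : D₁ ⊞ D₂ ⟶ R := biprod.desc η₁ (-η₂)
  -- epi-ness of gC and gD
  have hepiC : Epi gC := by
    apply HomologicalComplex.epi_of_epi_f
    intro n
    have hε : Epi (ε₁.f n) := by
      rw [ModuleCat.epi_iff_surjective]; exact hε₁ n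
    have : (biprod.inl : C₁ ⟶ C₁ ⊞ C₂).f n ≫ gC.f n = ε₁.f n := by
      rw [← HomologicalComplex.comp_f, show biprod.inl ≫ gC = ε₁ from biprod.inl_desc _ _]
    exact epi_of_epi_fac this
  have hepiD : Epi gD := by
    apply HomologicalComplex.epi_of_epi_f
    intro n
    have hη : Epi (η₁.f n) := by
      rw [ModuleCat.epi_iff_surjective]; exact hη₁ n
    have : (biprod.inl : D₁ ⟶ D₁ ⊞ D₂).f n ≫ gD.f n = η₁.f n := by
      rw [← HomologicalComplex.comp_f, show biprod.inl ≫ gD = η₁ from biprod.inl_desc _ _]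
    exact epi_of_epi_fac this
  -- the short exact sequences
  let S₁ : ShortComplex (CochainComplex (ModuleCat A) ℤ) :=
    ShortComplex.mk (kernel.ι gC) gC (kernel.condition gC)
  let S₂ : ShortComplex (CochainComplex (ModuleCat A) ℤ) :=
    ShortComplex.mk (kernel.ι gD) gD (kernel.condition gD)
  have hS₁ : S₁.ShortExact :=
    { exact := ShortComplex.exact_of_f_is_kernel _ (kernelIsKernel gC)
      mono_f := inferInstance
      epi_g := hepiC }
  have hS₂ : S₂.ShortExact :=
    { exact := ShortComplex.exact_of_f_is_kernel _ (kernelIsKernel gD)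
      mono_f := inferInstance
      epi_g := hepiD }
  -- the morphism of short exact sequences
  let Φ : S₁ ⟶ S₂ :=
    { τ₁ := kernel.map gC gD (biprod.map φ₁ φ₂) (𝟙 R)
        (by apply biprod.hom_ext' <;> simp [gC, gD, h₁, h₂])
      τ₂ := biprod.map φ₁ φ₂
      τ₃ := 𝟙 R
      comm₁₂ := by simp [S₁, S₂]
      comm₂₃ := by apply biprod.hom_ext' <;> simp [S₁, S₂, gC, gD, h₁, h₂] }
  have hτ₂ : QuasiIso Φ.τ₂ := aux_quasiIso_biprod_map φ₁ φ₂
  have hτ₃ : QuasiIso Φ.τ₃ := inferInstance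
  exact aux_quasiIso_τ₁ Φ hS₁ hS₂ hτ₂ hτ₃
end

section
/- Let k be a field of characteristic zero and R a graded-commutative k-algebra with zero differential. Let A and B be differential graded R-algebras equipped with augmentations ε_A : A → R and ε_B : B → R that are morphisms of DG R-algebras splitting the respective unit maps R → A, R → B, and let A ⊕_R B = ker(ε_A - ε_B : A ⊕ B → R) denote the fiber product, itself an augmented DG R-algebra. Suppose there are augmented DG R-algebra quasi-isomorphism roofs A ← M → H(A) and B ← N → H(B) (where H(A), H(B) carry zero differential and the induced augmentations). Then the induced maps A ⊕_R B ← M ⊕_R N → H(A) ⊕_R H(B) are quasi-isomorphisms of augmented DG R-algebras, and H(A ⊕_R B) ≅ H(A) ⊕_R H(B). -/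
open scoped DirectSum TensorProduct

universe u

/-- A graded-commutative differential graded `k`-algebra concentrated in non-negative
degrees: a `k`-algebra `carrier` with an internal direct sum decomposition into
`k`-submodules `grading n`, compatible with `1` and multiplication, together with a
degree `+1` differential `d` squaring to zero which is a graded derivation (Leibniz rule
with Koszul sign), such that multiplication is graded-commutative (Koszul sign). -/
structure GCDGA (k : Type u) [Field k] : Type (u + 1) where
  carrier : Type u
  [ring : Ring carrier]
  [alg : Algebra k carrier]
  grading : ℕ → Submodule k carrier
  internal : DirectSum.IsInternal grading
  one_mem : (1 : carrier) ∈ grading 0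
  mul_mem : ∀ {i j : ℕ} {a b : carrier}, a ∈ grading i → b ∈ grading j →
    a * b ∈ grading (i + j)
  d : carrier →ₗ[k] carrier
  d_sq : ∀ a : carrier, d (d a) = 0
  d_deg : ∀ {i : ℕ} {a : carrier}, a ∈ grading i → d a ∈ grading (i + 1)
  leibniz : ∀ {i : ℕ} (a b : carrier), a ∈ grading i →
    d (a * b) = d a * b + ((-1 : k) ^ i) • (a * d b)
  gcomm : ∀ {i j : ℕ} (a b : carrier), a ∈ grading i → b ∈ grading j →
    a * b = ((-1 : k) ^ (i * j)) • (b * a)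

attribute [instance] GCDGA.ring GCDGA.alg

variable {k : Type u} [Field k]

/-- A morphism of graded-commutative differential graded `k`-algebras: an algebra
homomorphism preserving the grading and commuting with the differentials. -/
structure GCDGAHom (X Y : GCDGA k) where
  toHom : X.carrier →ₐ[k] Y.carrier
  map_grading : ∀ {i : ℕ} {a : X.carrier}, a ∈ X.grading i → toHom a ∈ Y.grading i
  map_d : ∀ a : X.carrier, toHom (X.d a) = Y.d (toHom a)

/-- A morphism of DGAs is a quasi-isomorphism when it induces an isomorphism on
cohomology in every degree; expressed elementwise: every cocycle downstairs agrees with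
the image of a cocycle upstairs modulo a coboundary (surjectivity), and a cocycle
upstairs whose image is a coboundary is itself a coboundary (injectivity). -/
def IsQuasiIso {X Y : GCDGA k} (f : GCDGAHom X Y) : Prop :=
  ∀ i : ℕ,
    (∀ b ∈ Y.grading i, Y.d b = 0 →
      ∃ a ∈ X.grading i, X.d a = 0 ∧ ∃ y ∈ Y.grading (i - 1), b = f.toHom a + Y.d y) ∧
    (∀ a ∈ X.grading i, X.d a = 0 →
      (∃ y ∈ Y.grading (i - 1), f.toHom a = Y.d y) →
      ∃ x ∈ X.grading (i - 1), a = X.d x)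

/-- The restriction (to fiber products over `R`) of the pair map `(f₁, f₂)` is a
quasi-isomorphism.  The fiber product `X₁ ⊕_R X₂ = ker (ε₁ - ε₂)` is the complex whose
degree `i` part consists of pairs `(x₁, x₂)` of degree `i` elements with
`ε₁ x₁ = ε₂ x₂`, with differential `(d x₁, d x₂)`; this predicate expresses elementwise
that `(f₁, f₂) : X₁ ⊕_R X₂ → Y₁ ⊕_R Y₂` induces an isomorphism on cohomology in every
degree. -/
def FiberQuasiIso {R X₁ X₂ Y₁ Y₂ : GCDGA k}
    (εX₁ : GCDGAHom X₁ R) (εX₂ : GCDGAHom X₂ R)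
    (εY₁ : GCDGAHom Y₁ R) (εY₂ : GCDGAHom Y₂ R)
    (f₁ : GCDGAHom X₁ Y₁) (f₂ : GCDGAHom X₂ Y₂) : Prop :=
  ∀ i : ℕ,
    (∀ b₁ ∈ Y₁.grading i, ∀ b₂ ∈ Y₂.grading i,
      εY₁.toHom b₁ = εY₂.toHom b₂ → Y₁.d b₁ = 0 → Y₂.d b₂ = 0 →
      ∃ a₁ ∈ X₁.grading i, ∃ a₂ ∈ X₂.grading i,
        εX₁.toHom a₁ = εX₂.toHom a₂ ∧ X₁.d a₁ = 0 ∧ X₂.d a₂ = 0 ∧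
        ∃ y₁ ∈ Y₁.grading (i - 1), ∃ y₂ ∈ Y₂.grading (i - 1),
          εY₁.toHom y₁ = εY₂.toHom y₂ ∧
          b₁ = f₁.toHom a₁ + Y₁.d y₁ ∧ b₂ = f₂.toHom a₂ + Y₂.d y₂) ∧
    (∀ a₁ ∈ X₁.grading i, ∀ a₂ ∈ X₂.grading i,
      εX₁.toHom a₁ = εX₂.toHom a₂ → X₁.d a₁ = 0 → X₂.d a₂ = 0 →
      (∃ y₁ ∈ Y₁.grading (i - 1), ∃ y₂ ∈ Y₂.grading (i - 1),
        εY₁.toHom y₁ = εY₂.toHom y₂ ∧ f₁.toHom a₁ = Y₁.d y₁ ∧ f₂.toHom a₂ = Y₂.d y₂) →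
      ∃ x₁ ∈ X₁.grading (i - 1), ∃ x₂ ∈ X₂.grading (i - 1),
        εX₁.toHom x₁ = εX₂.toHom x₂ ∧ a₁ = X₁.d x₁ ∧ a₂ = X₂.d x₂)

lemma eps_d_zero {R X : GCDGA k} (hRd : R.d = 0) (ε : GCDGAHom X R) (a : X.carrier) :
    ε.toHom (X.d a) = 0 := by
  rw [ε.map_d, hRd]; rfl

lemma d_iota_zero {R X : GCDGA k} (hRd : R.d = 0) (ι : GCDGAHom R X) (r : R.carrier) :
    X.d (ι.toHom r) = 0 := by
  rw [← ι.map_d, hRd]; simp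

lemma fiber_qis_aux {R X₁ X₂ Y₁ Y₂ : GCDGA k} (hRd : R.d = 0)
    (ιX₂ : GCDGAHom R X₂) (ιY₂ : GCDGAHom R Y₂)
    (εX₁ : GCDGAHom X₁ R) (εX₂ : GCDGAHom X₂ R)
    (εY₁ : GCDGAHom Y₁ R) (εY₂ : GCDGAHom Y₂ R)
    (hεX₂ : ∀ r : R.carrier, εX₂.toHom (ιX₂.toHom r) = r)
    (hεY₂ : ∀ r : R.carrier, εY₂.toHom (ιY₂.toHom r) = r)
    (f₁ : GCDGAHom X₁ Y₁) (f₂ : GCDGAHom X₂ Y₂)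
    (hf₁ : IsQuasiIso f₁) (hf₂ : IsQuasiIso f₂)
    (hf₁ε : ∀ a : X₁.carrier, εY₁.toHom (f₁.toHom a) = εX₁.toHom a)
    (hf₂ε : ∀ a : X₂.carrier, εY₂.toHom (f₂.toHom a) = εX₂.toHom a) :
    FiberQuasiIso εX₁ εX₂ εY₁ εY₂ f₁ f₂ := by
  intro i
  constructor
  · intro b₁ hb₁ b₂ hb₂ hεb hd₁ hd₂
    obtain ⟨a₁, ha₁, hda₁, y₁, hy₁, hb₁eq⟩ := (hf₁ i).1 b₁ hb₁ hd₁
    obtain ⟨a₂, ha₂, hda₂, y₂, hy₂, hb₂eq⟩ := (hf₂ i).1 b₂ hb₂ hd₂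
    have hεa : εX₁.toHom a₁ = εX₂.toHom a₂ := by
      have e₁ : εY₁.toHom b₁ = εX₁.toHom a₁ := by
        rw [hb₁eq, map_add, eps_d_zero hRd, add_zero, hf₁ε]
      have e₂ : εY₂.toHom b₂ = εX₂.toHom a₂ := by
        rw [hb₂eq, map_add, eps_d_zero hRd, add_zero, hf₂ε]
      rw [← e₁, ← e₂, hεb]
    set r : R.carrier := εY₁.toHom y₁ - εY₂.toHom y₂ with hr
    set y₂' : Y₂.carrier := y₂ + ιY₂.toHom r with hy₂'def
    refine ⟨a₁, ha₁, a₂, ha₂, hεa, hda₁, hda₂, y₁, hy₁, y₂', ?_, ?_, hb₁eq, ?_⟩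
    · exact Y₂.grading (i - 1) |>.add_mem hy₂
        (ιY₂.map_grading (sub_mem (εY₁.map_grading hy₁) (εY₂.map_grading hy₂)))
    · rw [hy₂'def, map_add, hεY₂, hr]; abel
    · rw [hy₂'def, map_add, d_iota_zero hRd, add_zero, hb₂eq]
  · intro a₁ ha₁ a₂ ha₂ hεa hd₁ hd₂ hco
    obtain ⟨y₁, hy₁, y₂, hy₂, hεy, hfa₁, hfa₂⟩ := hco
    obtain ⟨x₁, hx₁, hdx₁⟩ := (hf₁ i).2 a₁ ha₁ hd₁ ⟨y₁, hy₁, hfa₁⟩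
    obtain ⟨x₂, hx₂, hdx₂⟩ := (hf₂ i).2 a₂ ha₂ hd₂ ⟨y₂, hy₂, hfa₂⟩
    set r : R.carrier := εX₁.toHom x₁ - εX₂.toHom x₂ with hr
    set x₂' : X₂.carrier := x₂ + ιX₂.toHom r with hx₂'def
    refine ⟨x₁, hx₁, x₂', ?_, ?_, hdx₁, ?_⟩
    · exact X₂.grading (i - 1) |>.add_mem hx₂
        (ιX₂.map_grading (sub_mem (εX₁.map_grading hx₁) (εX₂.map_grading hx₂)))
    · rw [hx₂'def, map_add, hεX₂, hr]; abel
    · rw [hx₂'def, map_add, d_iota_zero hRd, add_zero, hdx₂]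

/-- Let `R` be a graded-commutative `k`-algebra with zero differential, and
let `A`, `B` be DG `R`-algebras (structure maps `ιA : R → A`, `ιB : R → B`) with
augmentations `εA : A → R`, `εB : B → R` splitting the unit maps.  Suppose given
augmented DG `R`-algebra quasi-isomorphism roofs `A ← M → HA` and `B ← N → HB`, where
`HA`, `HB` carry zero differential (so `HA ≅ H(A)`, `HB ≅ H(B)` with the induced
augmentations).  Then the induced maps on fiber products
`A ⊕_R B ← M ⊕_R N → HA ⊕_R HB` are quasi-isomorphisms (of augmented DG `R`-algebras),
and the canonical map `H(A ⊕_R B) → H(A) ⊕_R H(B)` is an isomorphism (expressed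
elementwise, using that `H(R) = R` and `H(HA) = HA`, `H(HB) = HB`). -/
theorem stmt_5 (R A B M N HA HB : GCDGA k)
    (hRd : R.d = 0) (hHAd : HA.d = 0) (hHBd : HB.d = 0)
    -- structure maps of the DG `R`-algebras
    (ιA : GCDGAHom R A) (ιB : GCDGAHom R B) (ιM : GCDGAHom R M) (ιN : GCDGAHom R N)
    (ιHA : GCDGAHom R HA) (ιHB : GCDGAHom R HB)
    -- augmentations over `R`, splitting the units
    (εA : GCDGAHom A R) (εB : GCDGAHom B R) (εM : GCDGAHom M R) (εN : GCDGAHom N R)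
    (εHA : GCDGAHom HA R) (εHB : GCDGAHom HB R)
    (hεA : ∀ r : R.carrier, εA.toHom (ιA.toHom r) = r)
    (hεB : ∀ r : R.carrier, εB.toHom (ιB.toHom r) = r)
    (hεM : ∀ r : R.carrier, εM.toHom (ιM.toHom r) = r)
    (hεN : ∀ r : R.carrier, εN.toHom (ιN.toHom r) = r)
    (hεHA : ∀ r : R.carrier, εHA.toHom (ιHA.toHom r) = r)
    (hεHB : ∀ r : R.carrier, εHB.toHom (ιHB.toHom r) = r)
    -- the quasi-isomorphism roofs `A ← M → HA` and `B ← N → HB`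
    (f : GCDGAHom M A) (fH : GCDGAHom M HA) (g : GCDGAHom N B) (gH : GCDGAHom N HB)
    (hf : IsQuasiIso f) (hfH : IsQuasiIso fH) (hg : IsQuasiIso g) (hgH : IsQuasiIso gH)
    -- the roofs consist of morphisms of DG `R`-algebras ...
    (hfR : ∀ r : R.carrier, f.toHom (ιM.toHom r) = ιA.toHom r)
    (hfHR : ∀ r : R.carrier, fH.toHom (ιM.toHom r) = ιHA.toHom r)
    (hgR : ∀ r : R.carrier, g.toHom (ιN.toHom r) = ιB.toHom r)
    (hgHR : ∀ r : R.carrier, gH.toHom (ιN.toHom r) = ιHB.toHom r)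
    -- ... compatible with the augmentations
    (hfε : ∀ a : M.carrier, εA.toHom (f.toHom a) = εM.toHom a)
    (hfHε : ∀ a : M.carrier, εHA.toHom (fH.toHom a) = εM.toHom a)
    (hgε : ∀ a : N.carrier, εB.toHom (g.toHom a) = εN.toHom a)
    (hgHε : ∀ a : N.carrier, εHB.toHom (gH.toHom a) = εN.toHom a) :
    -- the induced map `M ⊕_R N → A ⊕_R B` is a quasi-isomorphism
    FiberQuasiIso εM εN εA εB f g ∧
    -- the induced map `M ⊕_R N → HA ⊕_R HB` is a quasi-isomorphism
    FiberQuasiIso εM εN εHA εHB fH gH ∧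
    -- `H(A ⊕_R B) ≅ H(A) ⊕_R H(B)` via the canonical map:
    (∀ i : ℕ,
      -- surjectivity of `H(A ⊕_R B) → H(A) ⊕_R H(B)`
      (∀ a ∈ A.grading i, ∀ b ∈ B.grading i, A.d a = 0 → B.d b = 0 →
        εA.toHom a = εB.toHom b →
        ∃ a₀ ∈ A.grading i, ∃ b₀ ∈ B.grading i,
          εA.toHom a₀ = εB.toHom b₀ ∧ A.d a₀ = 0 ∧ B.d b₀ = 0 ∧
          ∃ x ∈ A.grading (i - 1), ∃ y ∈ B.grading (i - 1),
            a = a₀ + A.d x ∧ b = b₀ + B.d y) ∧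
      -- injectivity of `H(A ⊕_R B) → H(A) ⊕_R H(B)`
      (∀ a ∈ A.grading i, ∀ b ∈ B.grading i, εA.toHom a = εB.toHom b →
        A.d a = 0 → B.d b = 0 →
        (∃ x ∈ A.grading (i - 1), a = A.d x) →
        (∃ y ∈ B.grading (i - 1), b = B.d y) →
        ∃ x ∈ A.grading (i - 1), ∃ y ∈ B.grading (i - 1),
          εA.toHom x = εB.toHom y ∧ a = A.d x ∧ b = B.d y)) := by
  refine ⟨fiber_qis_aux hRd ιN ιB εM εN εA εB hεN hεB f g hf hg hfε hgε,
    fiber_qis_aux hRd ιN ιHB εM εN εHA εHB hεN hεHB fH gH hfH hgH hfHε hgHε,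
    fun i => ⟨?_, ?_⟩⟩
  · intro a ha b hb hda hdb hε
    exact ⟨a, ha, b, hb, hε, hda, hdb, 0, (A.grading (i - 1)).zero_mem,
      0, (B.grading (i - 1)).zero_mem, by simp, by simp⟩
  · intro a ha b hb hε hda hdb hax hby
    obtain ⟨x, hx, hax⟩ := hax
    obtain ⟨y, hy, hby⟩ := hby
    set r : R.carrier := εA.toHom x - εB.toHom y with hr
    set y' : B.carrier := y + ιB.toHom r with hy'def
    refine ⟨x, hx, y', ?_, ?_, hax, ?_⟩
    · exact B.grading (i - 1) |>.add_mem hy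
        (ιB.map_grading (sub_mem (εA.map_grading hx) (εB.map_grading hy)))
    · rw [hy'def, map_add, hεB, hr]; abel
    · rw [hy'def, map_add, d_iota_zero hRd, add_zero, hby]
end

section
/- Let k be a field of characteristic zero, R a graded-commutative k-algebra with R^0 = k, and (M, d) a graded-commutative DG k-algebra with M^0 = k that is minimal, i.e. d(M̄) ⊆ (M̄)^2 where M̄ is the ideal of positive-degree elements. Let E be a DG algebra whose underlying graded algebra is R ⊗_k M, whose differential D is a derivation satisfying D(r ⊗ 1) = 0 for all r ∈ R and D(1 ⊗ α) − 1 ⊗ dα ∈ R^+ ⊗ M for all α ∈ M (where R^+ is the ideal of positive-degree elements of R). If E admits an R-augmentation, i.e. a morphism ε : E → R of DG R-algebras with ε(r ⊗ 1) = r (R having zero differential), then E is minimal as a DG k-algebra: D(Ē) ⊆ (Ē)^2, where Ē is the ideal of positive-degree elements of E. -/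
open scoped DirectSum TensorProduct

universe u

variable {k : Type u} [Field k]

variable [CharZero k]

/-- let `R` be a graded-commutative `k`-algebra with `R⁰ = k` (zero
differential), `M` a minimal connected graded-commutative DG `k`-algebra, and `E` a DG
algebra whose underlying graded algebra is `R ⊗ₖ M` (exhibited by graded algebra maps
`ιR : R → E`, `ιM : M → E` for which `(r, α) ↦ ιR r * ιM α` induces a linear bijection
`R ⊗ₖ M ≃ E` compatible with the gradings), whose differential `D = E.d` kills `R ⊗ 1`
and satisfies `D(1 ⊗ α) − 1 ⊗ dα ∈ R⁺ ⊗ M`.  If `E` admits an `R`-augmentation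
`ε : E → R` (a morphism of DG `R`-algebras with `ε ∘ ιR = id`), then `E` is minimal as a
DG `k`-algebra: `D(Ē) ⊆ (Ē)²`, where `Ē` is the ideal of positive-degree elements. -/
theorem stmt_11 (R M E : GCDGA k)
    (hRd : R.d = 0)
    (hR0 : R.grading 0 = Submodule.span k {(1 : R.carrier)})
    (hM0 : M.grading 0 = Submodule.span k {(1 : M.carrier)})
    -- `M` is minimal: `d(M̄) ⊆ (M̄)²`
    (hMmin : ∀ a ∈ (⨆ i : ℕ, M.grading (i + 1)),
      M.d a ∈ (⨆ i : ℕ, M.grading (i + 1)) * (⨆ i : ℕ, M.grading (i + 1)))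
    -- the underlying graded algebra of `E` is `R ⊗ₖ M`:
    (ιR : R.carrier →ₐ[k] E.carrier)
    (hιR_grading : ∀ {i : ℕ} {r : R.carrier}, r ∈ R.grading i → ιR r ∈ E.grading i)
    (hιR_d : ∀ r : R.carrier, E.d (ιR r) = 0)
    (ιM : M.carrier →ₐ[k] E.carrier)
    (hιM_grading : ∀ {i : ℕ} {a : M.carrier}, a ∈ M.grading i → ιM a ∈ E.grading i)
    (hmul : Function.Bijective
      (TensorProduct.lift
        (((LinearMap.mul k E.carrier).comp ιR.toLinearMap).compl₂ ιM.toLinearMap)))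
    (hgrading : ∀ n : ℕ, E.grading n =
      ⨆ (i : ℕ) (j : ℕ) (_ : i + j = n),
        Submodule.map ιR.toLinearMap (R.grading i) *
          Submodule.map ιM.toLinearMap (M.grading j))
    -- `D(1 ⊗ α) − 1 ⊗ dα ∈ R⁺ ⊗ M`
    (hDM : ∀ a : M.carrier, E.d (ιM a) - ιM (M.d a) ∈
      Submodule.map ιR.toLinearMap (⨆ i : ℕ, R.grading (i + 1)) *
        LinearMap.range ιM.toLinearMap)
    -- `ε : E → R` is an `R`-augmentation: a morphism of DG `R`-algebras with `ε(r ⊗ 1) = r`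
    (ε : E.carrier →ₐ[k] R.carrier)
    (hε_grading : ∀ {i : ℕ} {a : E.carrier}, a ∈ E.grading i → ε a ∈ R.grading i)
    (hε_d : ∀ a : E.carrier, ε (E.d a) = 0)
    (hε_ιR : ∀ r : R.carrier, ε (ιR r) = r) :
    ∀ a ∈ (⨆ i : ℕ, E.grading (i + 1)),
      E.d a ∈ (⨆ i : ℕ, E.grading (i + 1)) * (⨆ i : ℕ, E.grading (i + 1)) := by
  set Ebar : Submodule k E.carrier := ⨆ i : ℕ, E.grading (i + 1) with hEbarDef
  set Rbar : Submodule k R.carrier := ⨆ i : ℕ, R.grading (i + 1) with hRbarDef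
  set Mbar : Submodule k M.carrier := ⨆ i : ℕ, M.grading (i + 1) with hMbarDef
  -- pointwise inclusions
  have hιRbar : ∀ r ∈ Rbar, ιR r ∈ Ebar := by
    intro r hr
    have hle : Rbar ≤ Submodule.comap ιR.toLinearMap Ebar := by
      refine iSup_le fun i => fun x hx => Submodule.mem_comap.2 ?_
      exact Submodule.mem_iSup_of_mem i (hιR_grading hx)
    exact hle hr
  have hιMbar : ∀ m ∈ Mbar, ιM m ∈ Ebar := by
    intro m hm
    have hle : Mbar ≤ Submodule.comap ιM.toLinearMap Ebar := by
      refine iSup_le fun i => fun x hx => Submodule.mem_comap.2 ?_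
      exact Submodule.mem_iSup_of_mem i (hιM_grading hx)
    exact hle hm
  have hεMbar : ∀ m ∈ Mbar, ε (ιM m) ∈ Rbar := by
    intro m hm
    have hle : Mbar ≤ Submodule.comap (ε.toLinearMap ∘ₗ ιM.toLinearMap) Rbar := by
      refine iSup_le fun i => fun x hx => Submodule.mem_comap.2 ?_
      exact Submodule.mem_iSup_of_mem i (hε_grading (hιM_grading hx))
    exact hle hm
  have hPle : Submodule.map ιR.toLinearMap Rbar ≤ Ebar := by
    rintro x hx
    obtain ⟨r, hr, rfl⟩ := Submodule.mem_map.1 hx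
    exact hιRbar r hr
  have hMle : Submodule.map ιM.toLinearMap Mbar ≤ Ebar := by
    rintro x hx
    obtain ⟨m, hm, rfl⟩ := Submodule.mem_map.1 hx
    exact hιMbar m hm
  -- Claim A: the differential of `1 ⊗ α`, α of positive degree, lands in `Ē²`
  have hA : ∀ m ∈ Mbar, E.d (ιM m) ∈ Ebar * Ebar := by
    intro m hm
    have hs : E.d (ιM m) - ιM (M.d m) ∈
        Submodule.map ιR.toLinearMap Rbar * LinearMap.range ιM.toLinearMap := hDM m
    -- split the range of ιM into scalars plus positive part
    have htop : LinearMap.range ιM.toLinearMap ≤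
        Submodule.span k {(1 : E.carrier)} ⊔ Submodule.map ιM.toLinearMap Mbar := by
      rintro _ ⟨x, rfl⟩
      have hx : x ∈ (⊤ : Submodule k M.carrier) := trivial
      rw [← M.internal.submodule_iSup_eq_top] at hx
      have hle : (⨆ i : ℕ, M.grading i) ≤
          Submodule.comap ιM.toLinearMap
            (Submodule.span k {(1 : E.carrier)} ⊔ Submodule.map ιM.toLinearMap Mbar) := by
        refine iSup_le fun i => ?_
        cases i with
        | zero =>
          rw [hM0]
          intro y hy
          obtain ⟨c, rfl⟩ := Submodule.mem_span_singleton.1 hy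
          refine Submodule.mem_comap.2 (Submodule.mem_sup_left ?_)
          simp only [map_smul, AlgHom.toLinearMap_apply, map_one]
          exact Submodule.smul_mem _ c (Submodule.mem_span_singleton_self _)
        | succ i =>
          intro y hy
          exact Submodule.mem_comap.2 (Submodule.mem_sup_right
            ⟨y, Submodule.mem_iSup_of_mem i hy, rfl⟩)
      exact hle hx
    have hsplit : Submodule.map ιR.toLinearMap Rbar * LinearMap.range ιM.toLinearMap ≤
        Submodule.map ιR.toLinearMap Rbar ⊔
          Submodule.map ιR.toLinearMap Rbar * Submodule.map ιM.toLinearMap Mbar := by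
      calc Submodule.map ιR.toLinearMap Rbar * LinearMap.range ιM.toLinearMap
          ≤ Submodule.map ιR.toLinearMap Rbar *
              (Submodule.span k {(1 : E.carrier)} ⊔ Submodule.map ιM.toLinearMap Mbar) :=
            mul_le_mul' le_rfl htop
        _ = Submodule.map ιR.toLinearMap Rbar * Submodule.span k {(1 : E.carrier)} ⊔
              Submodule.map ιR.toLinearMap Rbar * Submodule.map ιM.toLinearMap Mbar :=
            Submodule.mul_sup _ _ _
        _ = Submodule.map ιR.toLinearMap Rbar ⊔
              Submodule.map ιR.toLinearMap Rbar * Submodule.map ιM.toLinearMap Mbar := by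
            rw [← Submodule.one_eq_span, Submodule.mul_one]
    obtain ⟨s₁, hs₁, s₂, hs₂, hsum⟩ := Submodule.mem_sup.1 (hsplit hs)
    obtain ⟨σ, hσ, rfl⟩ := Submodule.mem_map.1 hs₁
    have heq : E.d (ιM m) = ιM (M.d m) + (ιR σ + s₂) := by
      have h := hsum
      simp only [AlgHom.toLinearMap_apply] at h
      rw [h]; abel
    -- the coefficient σ lies in (R⁺)² thanks to the augmentation
    have hT1 : ε (ιM (M.d m)) ∈ Rbar * Rbar := by
      have hle : Mbar * Mbar ≤
          Submodule.comap (ε.toLinearMap ∘ₗ ιM.toLinearMap) (Rbar * Rbar) := by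
        rw [Submodule.mul_le]
        intro x hx y hy
        refine Submodule.mem_comap.2 ?_
        simp only [LinearMap.comp_apply, AlgHom.toLinearMap_apply, map_mul]
        exact Submodule.mul_mem_mul (hεMbar x hx) (hεMbar y hy)
      simpa using hle (hMmin m hm)
    have hT2 : ε s₂ ∈ Rbar * Rbar := by
      have hle : Submodule.map ιR.toLinearMap Rbar * Submodule.map ιM.toLinearMap Mbar ≤
          Submodule.comap ε.toLinearMap (Rbar * Rbar) := by
        rw [Submodule.mul_le]
        intro x hx y hy
        obtain ⟨r, hr, rfl⟩ := Submodule.mem_map.1 hx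
        obtain ⟨m', hm', rfl⟩ := Submodule.mem_map.1 hy
        refine Submodule.mem_comap.2 ?_
        simp only [AlgHom.toLinearMap_apply, map_mul, hε_ιR]
        exact Submodule.mul_mem_mul hr (hεMbar m' hm')
      simpa using hle hs₂
    have h0 : ε (ιM (M.d m)) + (σ + ε s₂) = 0 := by
      have h := hε_d (ιM m)
      rw [heq, map_add, map_add, hε_ιR] at h
      exact h
    have hσeq : σ = -ε (ιM (M.d m)) - ε s₂ := by
      have h2 : σ + ε s₂ = -ε (ιM (M.d m)) := eq_neg_of_add_eq_zero_right h0
      exact eq_sub_of_add_eq h2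
    have hσT : σ ∈ Rbar * Rbar := by
      rw [hσeq]; exact sub_mem (neg_mem hT1) hT2
    -- now assemble
    rw [heq]
    refine add_mem ?_ (add_mem ?_ ?_)
    · have hle : Mbar * Mbar ≤ Submodule.comap ιM.toLinearMap (Ebar * Ebar) := by
        rw [Submodule.mul_le]
        intro x hx y hy
        refine Submodule.mem_comap.2 ?_
        simp only [AlgHom.toLinearMap_apply, map_mul]
        exact Submodule.mul_mem_mul (hιMbar x hx) (hιMbar y hy)
      simpa using hle (hMmin m hm)
    · have hle : Rbar * Rbar ≤ Submodule.comap ιR.toLinearMap (Ebar * Ebar) := by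
        rw [Submodule.mul_le]
        intro x hx y hy
        refine Submodule.mem_comap.2 ?_
        simp only [AlgHom.toLinearMap_apply, map_mul]
        exact Submodule.mul_mem_mul (hιRbar x hx) (hιRbar y hy)
      simpa using hle hσT
    · exact mul_le_mul' hPle hMle hs₂
  -- main argument
  intro a ha
  have hC : Ebar ≤ Submodule.comap E.d (Ebar * Ebar) := by
    refine iSup_le fun n => ?_
    rw [hgrading (n + 1)]
    refine iSup_le fun i => iSup_le fun j => iSup_le fun hij => ?_
    rw [Submodule.mul_le]
    intro x hx y hy
    obtain ⟨r, hr, rfl⟩ := Submodule.mem_map.1 hx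
    obtain ⟨m, hm, rfl⟩ := Submodule.mem_map.1 hy
    refine Submodule.mem_comap.2 ?_
    simp only [AlgHom.toLinearMap_apply]
    rw [E.leibniz _ _ (hιR_grading hr), hιR_d, zero_mul, zero_add]
    refine Submodule.smul_mem _ _ ?_
    cases i with
    | zero =>
      rw [hR0] at hr
      obtain ⟨c, rfl⟩ := Submodule.mem_span_singleton.1 hr
      rw [map_smul, map_one, smul_mul_assoc, one_mul]
      refine Submodule.smul_mem _ _ ?_
      have hj : j = n + 1 := by omega
      subst hj
      exact hA m (Submodule.mem_iSup_of_mem n hm)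
    | succ i' =>
      exact Submodule.mul_mem_mul
        (Submodule.mem_iSup_of_mem i' (hιR_grading hr))
        (Submodule.mem_iSup_of_mem j (E.d_deg (hιM_grading hm)))
  exact hC ha
end
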